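/- Let τ₀(x,y) = 1 and τ₁(x,y) = x + iy + √3 as functions ℝ² → ℂ. Then the Bäcklund transformation relations between τ₀ and τ₁ hold on ℝ²: (Dₓ² + (1/√3)Dₓ + (i/√3)Dᵧ) τ₀·τ₁ = 0 and (−Dₓ − iDᵧ + Dₓ³ − √3 i DₓDᵧ) τ₀·τ₁ = 0. -/

import Mathlib

open Complex

/-- Hirota bilinear derivative `Dₓ^m Dᵧ^n f·g` for functions of `(x,y) ∈ ℝ²`. -/
noncomputable def hirota (m n : ℕ) (f g : ℝ × ℝ → ℂ) (p : ℝ × ℝ) : ℂ :=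
  iteratedDeriv m (fun a =>
    iteratedDeriv n (fun b =>
      f (p.1 + a, p.2 + b) * g (p.1 - a, p.2 - b)) 0) 0

noncomputable def tau0 : ℝ × ℝ → ℂ := fun _ => 1

noncomputable def tau1 (p : ℝ × ℝ) : ℂ :=
  (p.1 : ℂ) + (p.2 : ℂ) * I + (Real.sqrt 3 : ℂ)

/-! With `τ₀ ≡ 1` the product inside `Dₓ^m Dᵧ^n τ₀·τ₁` is `τ₁(x - a, y - b)`, which is affine in
`(a, b)`. Hence `Dₓ τ₀·τ₁ = -1`, `Dᵧ τ₀·τ₁ = -i`, and every Hirota derivative of total order at least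
two vanishes; both relations then reduce to `1 + i² = 0`. -/

theorem iteratedDeriv_const_add_smul {𝕜 F : Type*} [NontriviallyNormedField 𝕜]
    [NormedAddCommGroup F] [NormedSpace 𝕜 F] (n : ℕ) (c w : F) (t : 𝕜) :
    iteratedDeriv n (fun s => c + s • w) t =
      if n = 0 then c + t • w else if n = 1 then w else 0 := by
  rcases n.eq_zero_or_pos with rfl | hn
  · simp
  · rw [iteratedDeriv_const_add hn, iteratedDeriv_smul_const contDiffAt_id, iteratedDeriv_fun_id]
    simp [hn.ne']

theorem hirota_one_affine (m n : ℕ) (c u v : ℂ) (p : ℝ × ℝ) :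
    hirota m n (fun _ => 1) (fun q => c + q.1 * u + q.2 * v) p =
      if m = 0 ∧ n = 0 then c + p.1 * u + p.2 * v
      else if m = 1 ∧ n = 0 then -u
      else if m = 0 ∧ n = 1 then -v else 0 := by
  have shift (a b : ℝ) : (1 : ℂ) * (c + ↑(p.1 - a) * u + ↑(p.2 - b) * v) =
      (c + p.1 * u + p.2 * v + a • -u) + b • -v := by
    simp only [real_smul]; push_cast; ring
  simp only [hirota, shift, iteratedDeriv_const_add_smul]
  rcases n with _ | _ | n
  · simp only [if_true, zero_smul, add_zero, iteratedDeriv_const_add_smul]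
    simp
  · by_cases hm : m = 0 <;> simp [hm, iteratedDeriv_const]
  · simp

theorem tau1_eq_affine : tau1 = fun q => (Real.sqrt 3 : ℂ) + q.1 * 1 + q.2 * I := by
  funext q; simp only [tau1]; ring

/-- The Bäcklund transformation relations between `τ₀` and `τ₁`. -/
theorem backlund_tau0_tau1 :
    (∀ p : ℝ × ℝ,
      hirota 2 0 tau0 tau1 p + (1 / (Real.sqrt 3 : ℂ)) * hirota 1 0 tau0 tau1 p
        + (I / (Real.sqrt 3 : ℂ)) * hirota 0 1 tau0 tau1 p = 0) ∧
    (∀ p : ℝ × ℝ,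
      -hirota 1 0 tau0 tau1 p - I * hirota 0 1 tau0 tau1 p
        + hirota 3 0 tau0 tau1 p
        - (Real.sqrt 3 : ℂ) * I * hirota 1 1 tau0 tau1 p = 0) := by
  unfold tau0
  rw [tau1_eq_affine]
  refine ⟨fun p => ?_, fun p => ?_⟩ <;> simp +decide only [hirota_one_affine, ↓reduceIte]
  · linear_combination (-1 / (Real.sqrt 3 : ℂ)) * I_sq
  · linear_combination I_sq
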